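/- arXiv:2307.02772 — 6 statements merged into one kernel-verified Lean document; each statement's English description precedes it below -/
import Mathlib

section
/- Let lg denote the function lg t = max{log₂ t, 0} on the reals. Let x, y, a, b be real numbers with x > y > 0, a ≥ 0, and b ≥ 0. Then lg(x/2^b) − lg(y/2^b) ≤ (2/2^{a+b})·(x − y) + a. -/
noncomputable def lg (t : ℝ) : ℝ := max (Real.logb 2 t) 0

open Real

-- `log u ≤ u - 1` and `log 2 > 1 / 2`.
lemma logb_two_le_two_mul_sub_one {u : ℝ} (hu : 1 ≤ u) : logb 2 u ≤ 2 * (u - 1) := by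
  have hlog : log u ≤ u - 1 := log_le_sub_one_of_pos (by linarith)
  have hlog2 : (0.6931471803 : ℝ) < log 2 := log_two_gt_d9
  rw [logb, div_le_iff₀ (by linarith)]
  nlinarith

lemma logb_two_sub_logb_two_le {x y : ℝ} (hy : 0 < y) (hyx : y ≤ x) :
    logb 2 x - logb 2 y ≤ 2 * (x - y) / y := by
  have hratio := logb_two_le_two_mul_sub_one ((one_le_div hy).mpr hyx)
  rwa [logb_div (by linarith) hy.ne', div_sub_one hy.ne', ← mul_div_assoc] at hratio

lemma lg_nonneg (t : ℝ) : 0 ≤ lg t := le_max_right _ _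

lemma lg_of_one_le {t : ℝ} (ht : 1 ≤ t) : lg t = logb 2 t :=
  max_eq_left (logb_nonneg one_lt_two ht)

lemma lg_two_rpow {a : ℝ} (ha : 0 ≤ a) : lg (2 ^ a) = a := by
  rw [lg_of_one_le (one_le_rpow one_le_two ha), logb_rpow two_pos (by norm_num)]

lemma lg_le_of_le_two_rpow {t a : ℝ} (ht : 0 < t) (ha : 0 ≤ a) (hta : t ≤ 2 ^ a) : lg t ≤ a :=
  max_le ((logb_le_iff_le_rpow one_lt_two ht).mpr hta) ha

/- Above the threshold `c = 2 ^ a`, compare `x` with `y' = max y c` instead of `y`: the step from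
`y` to `y'` costs at most `lg c = a`, and from `y'` to `x` the slope of `log₂` is at most
`2 / y' ≤ 2 / c`. -/
lemma lg_sub_lg_le {x y a : ℝ} (hx : 0 < x) (hyx : y ≤ x) (ha : 0 ≤ a) :
    lg x - lg y ≤ 2 / 2 ^ a * (x - y) + a := by
  set c : ℝ := 2 ^ a
  have hc : 1 ≤ c := one_le_rpow one_le_two ha
  rcases le_or_gt x c with hxc | hcx
  · have hslope : 0 ≤ 2 / c * (x - y) := mul_nonneg (by positivity) (by linarith)
    linarith [lg_le_of_le_two_rpow hx ha hxc, lg_nonneg y]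
  obtain ⟨y', hy'⟩ : ∃ y', y' = max y c := ⟨_, rfl⟩
  have hyy' : y ≤ y' := hy' ▸ le_max_left y c
  have hcy' : c ≤ y' := hy' ▸ le_max_right y c
  have hy'x : y' ≤ x := hy' ▸ max_le hyx hcx.le
  have hstep : lg y' - lg y ≤ a := by
    rcases le_total c y with hcy | hyc
    · rw [hy', max_eq_left hcy]; linarith
    · rw [hy', max_eq_right hyc, lg_two_rpow ha]; linarith [lg_nonneg y]
  have hlog : lg x - lg y' ≤ 2 / c * (x - y) :=
    calc lg x - lg y' = logb 2 x - logb 2 y' := by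
          rw [lg_of_one_le (hc.trans hcx.le), lg_of_one_le (hc.trans hcy')]
      _ ≤ 2 * (x - y') / y' := logb_two_sub_logb_two_le (by linarith) hy'x
      _ ≤ 2 * (x - y) / c := by
          gcongr 2 * ?_ / ?_; linarith
      _ = 2 / c * (x - y) := by ring
  linarith

theorem stmt_1_general (x y a b : ℝ) (hxy : x > y) (hy : y > 0) (ha : a ≥ 0) :
    lg (x / 2 ^ b) - lg (y / 2 ^ b) ≤ (2 / 2 ^ (a + b)) * (x - y) + a := by
  have hb : (0 : ℝ) < 2 ^ b := rpow_pos_of_pos two_pos b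
  have hscale : 2 / 2 ^ a * (x / 2 ^ b - y / 2 ^ b) = 2 / 2 ^ (a + b) * (x - y) := by
    rw [rpow_add two_pos]
    field_simp
  rw [← hscale]
  exact lg_sub_lg_le (div_pos (hy.trans hxy) hb) (by gcongr) ha

/-- Lemma 6.3(ii): for reals `x > y > 0`, `a ≥ 0`, `b ≥ 0`,
`lg(x/2^b) − lg(y/2^b) ≤ (2/2^(a+b))·(x − y) + a`. -/
theorem stmt_1 (x y a b : ℝ) (hxy : x > y) (hy : y > 0) (ha : a ≥ 0) (hb : b ≥ 0) :
    lg (x / 2 ^ b) - lg (y / 2 ^ b) ≤ (2 / 2 ^ (a + b)) * (x - y) + a :=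
  stmt_1_general x y a b hxy hy ha
end

section
/- Let x, y, z be real numbers with 0 < z < y < x. Suppose log₂(x/y) > 1 and log₂(y/z) > 1. If log₂(log₂(x/z)) − log₂(log₂(x/y)) < 1, then log₂(log₂(y/z)) ≤ log₂(log₂(x/z)) − 1. -/
/-!
Write `A = log₂(x/y)` and `B = log₂(y/z)`, so that `log₂(x/z) = A + B`. The hypothesis on the
shifted rank says `A + B < 2A`, i.e. `B < A`; hence `A + B > 2B`, which is the claim after taking
`log₂`.
-/

open Real

namespace Real

theorem logb_div_eq_logb_div_add_logb_div {b x y z : ℝ} (hxy : x / y ≠ 0) (hyz : y / z ≠ 0) :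
    logb b (x / z) = logb b (x / y) + logb b (y / z) := by
  rw [← logb_mul hxy hyz, div_mul_div_cancel₀ (div_ne_zero_iff.1 hyz).1]

theorem logb_two_two_mul {a : ℝ} (ha : a ≠ 0) : logb 2 (2 * a) = logb 2 a + 1 := by
  rw [logb_mul two_ne_zero ha, logb_self_eq_one one_lt_two, add_comm]

theorem lt_of_logb_two_add_lt_logb_two_add_one {a c : ℝ} (ha : 0 < a) (hc : 0 < c)
    (h : logb 2 (a + c) < logb 2 a + 1) : c < a := by
  rw [← logb_two_two_mul ha.ne', logb_lt_logb_iff one_lt_two (by positivity) (by positivity)] at h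
  linarith

theorem logb_two_add_one_le_logb_two_add {a c : ℝ} (hc : 0 < c) (hca : c ≤ a) :
    logb 2 c + 1 ≤ logb 2 (a + c) := by
  rw [← logb_two_two_mul hc.ne']
  exact logb_le_logb_of_le one_lt_two (by positivity) (by linarith)

end Real

theorem stmt_6_general (x y z : ℝ)
    (h1 : 1 < Real.logb 2 (x / y)) (h2 : 1 < Real.logb 2 (y / z))
    (h3 : Real.logb 2 (Real.logb 2 (x / z)) - Real.logb 2 (Real.logb 2 (x / y)) < 1) :
    Real.logb 2 (Real.logb 2 (y / z)) ≤ Real.logb 2 (Real.logb 2 (x / z)) - 1 := by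
  have hxy : x / y ≠ 0 := by rintro h; rw [h, logb_zero] at h1; linarith
  have hyz : y / z ≠ 0 := by rintro h; rw [h, logb_zero] at h2; linarith
  rw [logb_div_eq_logb_div_add_logb_div hxy hyz] at h3 ⊢
  have hA : 0 < logb 2 (x / y) := by linarith
  have hB : 0 < logb 2 (y / z) := by linarith
  have hBA := lt_of_logb_two_add_lt_logb_two_add_one hA hB (by linarith)
  linarith [logb_two_add_one_le_logb_two_add hB hBA.le]

/-- Numerical core of Lemma 6.11: if `0 < z < y < x`, `log₂(x/y) > 1`, `log₂(y/z) > 1`,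
and `log₂ log₂ (x/z) − log₂ log₂ (x/y) < 1`, then
`log₂ log₂ (y/z) ≤ log₂ log₂ (x/z) − 1`. -/
theorem stmt_6 (x y z : ℝ) (hz : 0 < z) (hzy : z < y) (hyx : y < x)
    (h1 : 1 < Real.logb 2 (x / y)) (h2 : 1 < Real.logb 2 (y / z))
    (h3 : Real.logb 2 (Real.logb 2 (x / z)) - Real.logb 2 (Real.logb 2 (x / y)) < 1) :
    Real.logb 2 (Real.logb 2 (y / z)) ≤ Real.logb 2 (Real.logb 2 (x / z)) - 1 :=
  stmt_6_general x y z h1 h2 h3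
end

section
/- Let T be a finite binary tree whose nodes carry pairwise distinct labels from a linearly ordered type and which satisfies the symmetric-order (binary search tree) property. Let x be a label occurring in T. Then every edge of T that crosses the boundary of x lies on the path obtained by following the search path from the root of T to the node labeled x and then, if the node labeled x has a right child, appending the edge from that node to its right child. -/
/-- Finite binary trees with labeled nodes. -/
inductive BTree (α : Type*) where
  | leaf : BTree α
  | node : BTree α → α → BTree α → BTree α

namespace BTree

variable {α : Type*}

/-- `x` is a label occurring in the tree. -/
def Mem : BTree α → α → Prop
  | .leaf, _ => False
  | .node l a r, x => x = a ∨ Mem l x ∨ Mem r x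

/-- The label of the root, if the tree is nonempty. -/
def root? : BTree α → Option α
  | .leaf => none
  | .node _ a _ => some a

/-- The symmetric-order (binary search tree) property; with strict comparisons,
it forces all labels to be pairwise distinct. -/
def IsBST [LinearOrder α] : BTree α → Prop
  | .leaf => True
  | .node l a r =>
      (∀ y, Mem l y → y < a) ∧ (∀ y, Mem r y → a < y) ∧ IsBST l ∧ IsBST r

/-- `(u, v)` is an edge of the tree: `v` labels a child of the node labeled `u`. -/
def IsEdge : BTree α → α → α → Prop
  | .leaf, _, _ => False
  | .node l a r, u, v =>
      (u = a ∧ l.root? = some v) ∨ (u = a ∧ r.root? = some v) ∨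
        IsEdge l u v ∨ IsEdge r u v

/-- The search path from the root to the node labeled `x`, extended by the edge
to that node's right child if it exists. -/
def searchPath [LinearOrder α] : BTree α → α → List α
  | .leaf, _ => []
  | .node l a r, x =>
      if x < a then a :: searchPath l x
      else if a < x then a :: searchPath r x
      else a :: (match r.root? with | some b => [b] | none => [])

end BTree

/-!
Induct on the tree. An edge inside one subtree has both endpoints on the same side of the
root label `a`, so a crossing edge there forces the search for `x` into that subtree. An edge
at the root crossing the boundary is `(a, v)` with `v ≤ x < a` when `v` is the left child, in
which case the search goes left through `v`; or `a ≤ x < v` when `v` is the right child, in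
which case the search either goes right through `v` or stops at `a = x` and appends `v`.
-/

namespace BTree

variable {α : Type*}

theorem mem_of_root?_eq_some {t : BTree α} {b : α} (h : t.root? = some b) : t.Mem b := by
  cases t with
  | leaf => simp [root?] at h
  | node l a r =>
    simp only [root?, Option.some.injEq] at h
    exact Or.inl h.symm

theorem IsEdge.mem {t : BTree α} {u v : α} (h : t.IsEdge u v) : t.Mem u ∧ t.Mem v := by
  induction t with
  | leaf => exact h.elim
  | node l a r ihl ihr =>
    rcases h with ⟨rfl, h⟩ | ⟨rfl, h⟩ | h | h
    · exact ⟨Or.inl rfl, Or.inr (Or.inl (mem_of_root?_eq_some h))⟩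
    · exact ⟨Or.inl rfl, Or.inr (Or.inr (mem_of_root?_eq_some h))⟩
    · exact (ihl h).imp (Or.inr ∘ Or.inl) (Or.inr ∘ Or.inl)
    · exact (ihr h).imp (Or.inr ∘ Or.inr) (Or.inr ∘ Or.inr)

variable [LinearOrder α]

theorem searchPath_node_of_lt {l r : BTree α} {a x : α} (h : x < a) :
    (node l a r).searchPath x = a :: l.searchPath x := by
  simp [searchPath, h]

theorem searchPath_node_of_gt {l r : BTree α} {a x : α} (h : a < x) :
    (node l a r).searchPath x = a :: r.searchPath x := by
  simp [searchPath, h, h.not_gt]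

theorem searchPath_node_self_of_root?_eq_some {l r : BTree α} {a b : α}
    (h : r.root? = some b) : (node l a r).searchPath a = [a, b] := by
  simp [searchPath, h]

theorem infix_cons_searchPath_of_root?_eq_some {t : BTree α} {a b : α} (x : α)
    (h : t.root? = some b) : [a, b] <:+: a :: t.searchPath x := by
  cases t with
  | leaf => simp [root?] at h
  | node l c r =>
    simp only [root?, Option.some.injEq] at h
    subst h
    unfold searchPath
    split_ifs <;> exact ⟨[], _, rfl⟩

theorem infix_searchPath_of_isEdge {t : BTree α} (hT : t.IsBST) {x u v : α}
    (he : t.IsEdge u v) (hcross : (u ≤ x ∧ x < v) ∨ (v ≤ x ∧ x < u)) :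
    [u, v] <:+: t.searchPath x := by
  induction t with
  | leaf => exact he.elim
  | node l a r ihl ihr =>
    obtain ⟨hl, hr, hTl, hTr⟩ := hT
    rcases he with ⟨rfl, hv⟩ | ⟨rfl, hv⟩ | he | he
    · have hvu : v < u := hl v (mem_of_root?_eq_some hv)
      have hxu : x < u := by
        rcases hcross with ⟨hux, hxv⟩ | ⟨-, hxu⟩
        · exact absurd (hux.trans_lt (hxv.trans hvu)) (lt_irrefl u)
        · exact hxu
      rw [searchPath_node_of_lt hxu]
      exact infix_cons_searchPath_of_root?_eq_some x hv
    · have huv : u < v := hr v (mem_of_root?_eq_some hv)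
      have hux : u ≤ x := by
        rcases hcross with ⟨hux, -⟩ | ⟨hvx, hxu⟩
        · exact hux
        · exact absurd (hvx.trans_lt (hxu.trans huv)) (lt_irrefl v)
      rcases hux.lt_or_eq with hux | rfl
      · rw [searchPath_node_of_gt hux]
        exact infix_cons_searchPath_of_root?_eq_some x hv
      · rw [searchPath_node_self_of_root?_eq_some hv]
    · obtain ⟨hu, hv⟩ := he.mem
      have hxa : x < a := by
        rcases hcross with ⟨-, hxv⟩ | ⟨-, hxu⟩
        · exact hxv.trans (hl v hv)
        · exact hxu.trans (hl u hu)
      rw [searchPath_node_of_lt hxa]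
      exact (ihl hTl he).trans (List.suffix_cons a _).isInfix
    · obtain ⟨hu, hv⟩ := he.mem
      have hax : a < x := by
        rcases hcross with ⟨hux, -⟩ | ⟨hvx, -⟩
        · exact (hr u hu).trans_le hux
        · exact (hr v hv).trans_le hvx
      rw [searchPath_node_of_gt hax]
      exact (ihr hTr he).trans (List.suffix_cons a _).isInfix

end BTree

theorem stmt_7_general {α : Type*} [LinearOrder α] (T : BTree α) (hT : T.IsBST)
    (x : α) (u v : α) (he : T.IsEdge u v)
    (hcross : (u ≤ x ∧ x < v) ∨ (v ≤ x ∧ x < u)) :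
    [u, v] <:+: T.searchPath x :=
  BTree.infix_searchPath_of_isEdge hT he hcross

/-- Lemma 7.1 (first assertion): in a binary search tree `T` containing a label `x`,
every edge of `T` crossing the boundary of `x` (one endpoint `≤ x`, the other `> x`)
lies on the search path from the root to `x`, extended by the edge to the right child
of `x` if it exists. -/
theorem stmt_7 {α : Type*} [LinearOrder α] (T : BTree α) (hT : T.IsBST)
    (x : α) (hx : T.Mem x) (u v : α) (he : T.IsEdge u v)
    (hcross : (u ≤ x ∧ x < v) ∨ (v ≤ x ∧ x < u)) :
    [u, v] <:+: T.searchPath x :=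
  stmt_7_general T hT x u v he hcross
end

section
/- Let V be a finite set with |V| = k + 1, let r ∈ V, and let p : V → V be a parent function with p(r) = r such that for every v ∈ V some iterate of p maps v to r, so that the pairs (p(v), v) for v ≠ r are the k edges of a rooted tree on V. Assume the tree is binary: every u ∈ V has at most 2 children, i.e., |{v ∈ V : v ≠ r and p(v) = u}| ≤ 2 (where for children of r we additionally require v ≠ r). Let M ⊆ V be an arbitrary set of marked nodes, and call an edge (p(v), v) good if v ∈ M or p(v) ∉ M. Then the number of good edges is at least k/3 − 2/3. -/
/-!
An edge `(p v, v)` is bad only if its parent is marked, and a marked node has at most two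
children, so there are at most `2 |M|` bad edges. Conversely every marked non-root node `v`
makes its own edge good, so `|M| ≤ g + 1` for the number `g` of good edges. Hence
`k = g + (k - g) ≤ g + 2 (g + 1)`.
-/

open Finset

section EdgeCount

variable {V : Type*} [Fintype V] [DecidableEq V] (r : V) (p : V → V) (M : Finset V)

/-- A non-root node `v` stands for the edge `(p v, v)`. -/
def goodEdges : Finset V := univ.filter fun v => v ≠ r ∧ (v ∈ M ∨ p v ∉ M)

def badEdges : Finset V := univ.filter fun v => v ≠ r ∧ v ∉ M ∧ p v ∈ M

theorem card_goodEdges_add_card_badEdges :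
    #(goodEdges r p M) + #(badEdges r p M) = Fintype.card V - 1 := by
  have hunion : goodEdges r p M ∪ badEdges r p M = univ.erase r := by
    ext v
    simp only [goodEdges, badEdges, mem_union, mem_filter, mem_univ, true_and, mem_erase]
    tauto
  have hdisj : Disjoint (goodEdges r p M) (badEdges r p M) := by
    simp only [goodEdges, badEdges, disjoint_left, mem_filter, mem_univ, true_and]
    tauto
  rw [← card_union_of_disjoint hdisj, hunion, card_erase_of_mem (mem_univ r), card_univ]

theorem card_badEdges_le_mul {d : ℕ} (hdeg : ∀ u, #(univ.filter fun v => v ≠ r ∧ p v = u) ≤ d) :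
    #(badEdges r p M) ≤ d * #M := by
  refine card_le_mul_card_image_of_maps_to (f := p) (fun v hv => (mem_filter.1 hv).2.2.2)
    _ fun u _ => le_trans (card_le_card fun v hv => ?_) (hdeg u)
  simp only [badEdges, mem_filter, mem_univ, true_and] at hv ⊢
  exact ⟨hv.1.1, hv.2⟩

theorem card_le_card_goodEdges_add_one : #M ≤ #(goodEdges r p M) + 1 := by
  have hsub : M.erase r ⊆ goodEdges r p M := fun v hv => by
    obtain ⟨hvr, hvM⟩ := mem_erase.1 hv
    exact mem_filter.2 ⟨mem_univ v, hvr, Or.inl hvM⟩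
  have := pred_card_le_card_erase (s := M) (a := r)
  have := card_le_card hsub
  omega

end EdgeCount

open Finset in
theorem stmt_9_general {V : Type*} [Fintype V] [DecidableEq V] (k : ℕ)
    (hcard : Fintype.card V = k + 1) (r : V) (p : V → V)
    (hbin : ∀ u : V, (Finset.univ.filter (fun v => v ≠ r ∧ p v = u)).card ≤ 2)
    (M : Finset V) :
    (k : ℝ) / 3 - 2 / 3 ≤
      ((Finset.univ.filter (fun v => v ≠ r ∧ (v ∈ M ∨ p v ∉ M))).card : ℝ) := by
  have hsplit := card_goodEdges_add_card_badEdges r p M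
  have hbad := card_badEdges_le_mul r p M hbin
  have hmarked := card_le_card_goodEdges_add_one r p M
  have hk : k ≤ 3 * #(goodEdges r p M) + 2 := by omega
  have hk' : (k : ℝ) ≤ 3 * #(goodEdges r p M) + 2 := by exact_mod_cast hk
  change (k : ℝ) / 3 - 2 / 3 ≤ #(goodEdges r p M)
  linarith

open Finset in
/-- Combinatorial core of Lemma 4.5: let `p` be the parent function of a rooted tree
with root `r` on `k+1` nodes in which every node has at most two children, and let
`M` be a set of marked nodes.  Calling an edge `(p v, v)` good if `v ∈ M` or
`p v ∉ M`, the number of good edges is at least `k/3 − 2/3`. -/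
theorem stmt_9 {V : Type*} [Fintype V] [DecidableEq V] (k : ℕ)
    (hcard : Fintype.card V = k + 1) (r : V) (p : V → V) (hr : p r = r)
    (hreach : ∀ v : V, ∃ m : ℕ, p^[m] v = r)
    (hbin : ∀ u : V, (Finset.univ.filter (fun v => v ≠ r ∧ p v = u)).card ≤ 2)
    (M : Finset V) :
    (k : ℝ) / 3 - 2 / 3 ≤
      ((Finset.univ.filter (fun v => v ≠ r ∧ (v ∈ M ∨ p v ∉ M))).card : ℝ) :=
  stmt_9_general k hcard r p hbin M
end

section
/- Let V be a finite set with |V| = k + 1, let r ∈ V, and let p : V → V be a parent function with p(r) = r such that for every v ∈ V some iterate of p maps v to r, so that the pairs (p(v), v) for v ≠ r are the k edges of a rooted tree on V. Let P be a collection of ⌊(k+1)/2⌋ pairwise disjoint two-element subsets of V such that every {a, b} ∈ P is an edge of the tree (p(a) = b or p(b) = a). Let M ⊆ V be an arbitrary set of marked nodes, and call an edge (p(v), v) good if v ∈ M or p(v) ∉ M. Then the number of good edges is at least k/2 − 1. -/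
/-!
Identify the edge `(p v, v)` with its child `v`. If `v` is bad (unmarked with marked parent),
then `p v` is marked and hence not bad, so no pair of `P` consists of two bad nodes. Picking a
non-bad node from each of the disjoint pairs gives `#bad + #P ≤ k + 1`, and therefore
`#good ≥ k - #bad ≥ #P - 1 ≥ k/2 - 1`.
-/

open Finset

/-- Each member of `P` keeps a node outside `B`, and these nodes are distinct by disjointness. -/
theorem card_add_card_le_card_of_not_subset {V : Type*} [Fintype V] [DecidableEq V]
    {P : Finset (Finset V)} (hdisj : (P : Set (Finset V)).PairwiseDisjoint id)
    {B : Finset V} (hB : ∀ e ∈ P, ¬e ⊆ B) :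
    #B + #P ≤ Fintype.card V := by
  have hcard : #P ≤ #(P.biUnion (· \ B)) := by
    rw [card_biUnion (t := (· \ B)) (hdisj.mono_on fun _ _ => sdiff_subset)]
    exact card_eq_sum_ones P ▸ sum_le_sum fun e he =>
      card_pos.mpr (sdiff_nonempty.mpr (hB e he))
  calc #B + #P ≤ #B + #(P.biUnion (· \ B)) := by omega
    _ = #(B ∪ P.biUnion (· \ B)) :=
      (card_union_of_disjoint ((disjoint_biUnion_right _ _ _).mpr fun _ _ => disjoint_sdiff)).symm
    _ ≤ Fintype.card V := card_le_univ _

section ParentFunction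

variable {V : Type*} [Fintype V] [DecidableEq V] (p : V → V) (M : Finset V)

def badNodes : Finset V := univ.filter fun v => v ∉ M ∧ p v ∈ M

theorem pair_not_subset_badNodes {a b : V} (hab : p a = b ∨ p b = a) :
    ¬{a, b} ⊆ badNodes p M := by
  intro h
  have ha := h (mem_insert_self a {b})
  have hb := h (mem_insert_of_mem (mem_singleton_self b))
  simp only [badNodes, mem_filter, mem_univ, true_and] at ha hb
  rcases hab with rfl | rfl
  · exact hb.1 ha.2
  · exact ha.1 hb.2

theorem card_sub_one_le_card_good_add_card_badNodes (r : V) :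
    Fintype.card V - 1 ≤
      #(univ.filter fun v => v ≠ r ∧ (v ∈ M ∨ p v ∉ M)) + #(badNodes p M) := by
  have hcover : univ.erase r ⊆ (univ.filter fun v => v ≠ r ∧ (v ∈ M ∨ p v ∉ M)) ∪
      badNodes p M := by
    intro v hv
    have hvr := ne_of_mem_erase hv
    by_cases hgood : v ∈ M ∨ p v ∉ M
    · exact mem_union_left _ (mem_filter.mpr ⟨mem_univ v, hvr, hgood⟩)
    · push Not at hgood
      exact mem_union_right _ (mem_filter.mpr ⟨mem_univ v, hgood⟩)
  calc Fintype.card V - 1 = #(univ.erase r) := by rw [card_erase_of_mem (mem_univ r), card_univ]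
    _ ≤ _ := (card_le_card hcover).trans (card_union_le _ _)

end ParentFunction

open Finset in
theorem stmt_10_general {V : Type*} [Fintype V] [DecidableEq V] (k : ℕ)
    (hcard : Fintype.card V = k + 1) (r : V) (p : V → V)
    (P : Finset (Finset V)) (hPcard : P.card = (k + 1) / 2)
    (hdisj : (P : Set (Finset V)).PairwiseDisjoint id)
    (hedge : ∀ e ∈ P, ∃ a b : V, e = {a, b} ∧ (p a = b ∨ p b = a))
    (M : Finset V) :
    (k : ℝ) / 2 - 1 ≤
      ((Finset.univ.filter (fun v => v ≠ r ∧ (v ∈ M ∨ p v ∉ M))).card : ℝ) := by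
  have hbad : #(badNodes p M) + #P ≤ Fintype.card V :=
    card_add_card_le_card_of_not_subset hdisj fun e he => by
      obtain ⟨a, b, rfl, hab⟩ := hedge e he
      exact pair_not_subset_badNodes p M hab
  have hgood := card_sub_one_le_card_good_add_card_badNodes p M r
  have hk : k ≤ 2 * #(univ.filter fun v => v ≠ r ∧ (v ∈ M ∨ p v ∉ M)) + 2 := by omega
  have hk' := (Nat.cast_le (α := ℝ)).mpr hk
  push_cast at hk'
  linarith

open Finset in
/-- Combinatorial core of Lemma 4.3: let `p` be the parent function of a rooted tree
with root `r` on `k+1` nodes, and let `P` be a collection of `⌊(k+1)/2⌋` pairwise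
disjoint two-element subsets of the nodes, each of which is an edge of the tree.
Let `M` be a set of marked nodes, and call an edge `(p v, v)` good if `v ∈ M` or
`p v ∉ M`.  Then the number of good edges is at least `k/2 − 1`. -/
theorem stmt_10 {V : Type*} [Fintype V] [DecidableEq V] (k : ℕ)
    (hcard : Fintype.card V = k + 1) (r : V) (p : V → V) (hr : p r = r)
    (hreach : ∀ v : V, ∃ m : ℕ, p^[m] v = r)
    (P : Finset (Finset V)) (hPcard : P.card = (k + 1) / 2)
    (hdisj : (P : Set (Finset V)).PairwiseDisjoint id)
    (hpair : ∀ e ∈ P, e.card = 2)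
    (hedge : ∀ e ∈ P, ∃ a b : V, e = {a, b} ∧ (p a = b ∨ p b = a))
    (M : Finset V) :
    (k : ℝ) / 2 - 1 ≤
      ((Finset.univ.filter (fun v => v ≠ r ∧ (v ∈ M ∨ p v ∉ M))).card : ℝ) :=
  stmt_10_general k hcard r p P hPcard hdisj hedge M
end

section
/- Consider leftmost locally maximum linking on a list of m ≥ 1 roots with pairwise distinct keys from a linearly ordered type: while more than one root remains, find the leftmost root v on the current list whose key is at least the key of each of its (one or two) neighbors; if v has a left neighbor and either v has no right neighbor or the left neighbor's key is at least the right neighbor's key, then the left neighbor u wins a right link with v and v is removed from the list; otherwise the right neighbor w of v wins a left link with v and v is removed from the list. Then, over the entire process until one root remains, each root wins at most one left link and at most one right link. -/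
/-!
Once `x` wins a right link, its right neighbor is smaller than `x`. A root with a larger left
neighbor is never a local maximum, so it is never removed, and the property persists while `x`
is on the list. But a right-link winner is smaller than its right neighbor, as both lie on the
increasing prefix ending at the local maximum; so `x` never wins a second right link. Left links
are symmetric: a left-link winner is smaller than its left neighbor, and after winning one its
left neighbor stays smaller.
-/

/-- One step of leftmost locally maximum linking on a list of roots with distinct
keys.  `LLMStep l (win, lose, isLeft) l'` means: `lose` is the leftmost root of `l`
whose key is at least the key of each of its neighbors (equivalently, the prefix of
`l` up to `lose` is strictly increasing and the next root, if any, is smaller);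
`win` is the neighbor that wins the link (the left neighbor wins a right link,
coded `isLeft = false`, when it exists and its key is at least that of the right
neighbor or there is no right neighbor; otherwise the right neighbor wins a left
link, coded `isLeft = true`); and `l'` is `l` with `lose` removed. -/
inductive LLMStep {α : Type*} [LinearOrder α] : List α → α × α × Bool → List α → Prop
  /-- The right neighbor `w` of the leftmost local maximum `v` wins a left link. -/
  | left (A : List α) (v w : α) (B : List α)
      (hA : (A ++ [v]).Chain' (· < ·))
      (hw : w < v)
      (hcase : A = [] ∨ ∃ u, A.getLast? = some u ∧ u < w) :
      LLMStep (A ++ v :: w :: B) (w, v, true) (A ++ w :: B)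
  /-- The left neighbor `u` of the leftmost local maximum `v` wins a right link. -/
  | right (A : List α) (u v : α) (B : List α)
      (hA : (A ++ [u, v]).Chain' (· < ·))
      (hB : ∀ w ∈ B.head?, w < u) :
      LLMStep (A ++ u :: v :: B) (u, v, false) (A ++ u :: B)

namespace LLMStep

variable {α : Type*} [LinearOrder α]

def RightNeighborsLT (x : α) (l : List α) : Prop := l.IsChain fun a b => a = x → b < x

def LeftNeighborsLT (x : α) (l : List α) : Prop := l.IsChain fun a b => b = x → a < x

lemma rightNeighborsLT_of_not_mem {x : α} {l : List α} (hx : x ∉ l) : RightNeighborsLT x l :=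
  (List.isChain_isInfix l).imp_of_mem_imp fun _ _ ha _ _ hax => absurd (hax ▸ ha) hx

lemma leftNeighborsLT_of_not_mem {x : α} {l : List α} (hx : x ∉ l) : LeftNeighborsLT x l :=
  (List.isChain_isInfix l).imp_of_mem_imp fun _ _ _ hb _ hbx => absurd (hbx ▸ hb) hx

lemma sublist {l l' : List α} {p : α × α × Bool} (h : LLMStep l p l') : l'.Sublist l := by
  cases h with
  | left A v w B => exact (List.sublist_cons_self v (w :: B)).append_left A
  | right A u v B => exact ((List.sublist_cons_self v B).cons_cons u).append_left A

lemma rightNeighborsLT {l l' : List α} {p : α × α × Bool} {x : α}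
    (h : LLMStep l p l') (hx : RightNeighborsLT x l) : RightNeighborsLT x l' := by
  cases h with
  | left A v w B hAv =>
    obtain ⟨hA, hvwB, hjoin⟩ := List.isChain_append.mp hx
    refine hA.append hvwB.tail fun a ha _ _ hax => ?_
    have hav : a < v := (List.isChain_append.mp hAv).2.2 a ha v rfl
    exact absurd (hjoin a ha v rfl hax) (hax ▸ hav).not_gt
  | right A u v B _ hBu =>
    obtain ⟨hA, huvB, hjoin⟩ := List.isChain_append.mp hx
    exact hA.append (huvB.tail.tail.cons fun b hb hux => hux ▸ hBu b hb) hjoin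

lemma leftNeighborsLT {l l' : List α} {p : α × α × Bool} {x : α}
    (h : LLMStep l p l') (hx : LeftNeighborsLT x l) : LeftNeighborsLT x l' := by
  cases h with
  | left A v w B _ _ hAw =>
    obtain ⟨hA, hvwB, -⟩ := List.isChain_append.mp hx
    refine hA.append hvwB.tail fun a ha _ hw hwx => ?_
    obtain rfl : w = _ := Option.some_inj.mp hw
    rcases hAw with rfl | ⟨u, hu, huw⟩
    · simp at ha
    · obtain rfl : a = u := Option.some_inj.mp (ha.symm.trans hu)
      exact hwx ▸ huw
  | right A u v B hAuv _ =>
    obtain ⟨hA, huvB, hjoin⟩ := List.isChain_append.mp hx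
    have huv : u < v := List.isChain_pair.mp (List.isChain_append.mp hAuv).2.1
    rw [List.isChain_cons_cons, List.isChain_cons] at huvB
    exact hA.append (huvB.2.2.cons fun b hb hbx => huv.trans (huvB.2.1 b hb hbx)) hjoin

lemma rightNeighborsLT_winner {l l' : List α} {p : α × α × Bool} (h : LLMStep l p l')
    (hl : l.Nodup) (hp : p.2.2 = false) : RightNeighborsLT p.1 l' := by
  have hl' := h.sublist.nodup hl
  cases h with
  | left => cases hp
  | right A u v B _ hBu =>
    rw [List.nodup_middle, List.nodup_cons, List.mem_append, not_or] at hl'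
    obtain ⟨⟨huA, huB⟩, -⟩ := hl'
    exact (rightNeighborsLT_of_not_mem huA).append
      ((rightNeighborsLT_of_not_mem huB).cons fun b hb _ => hBu b hb)
      fun a ha _ _ hau => absurd (hau ▸ List.mem_of_getLast? ha) huA

lemma leftNeighborsLT_winner {l l' : List α} {p : α × α × Bool} (h : LLMStep l p l')
    (hl : l.Nodup) (hp : p.2.2 = true) : LeftNeighborsLT p.1 l' := by
  have hl' := h.sublist.nodup hl
  cases h with
  | right => cases hp
  | left A v w B _ _ hAw =>
    rw [List.nodup_middle, List.nodup_cons, List.mem_append, not_or] at hl'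
    obtain ⟨⟨hwA, hwB⟩, -⟩ := hl'
    refine (leftNeighborsLT_of_not_mem hwA).append
      ((leftNeighborsLT_of_not_mem hwB).cons fun b hb hbw =>
        absurd (hbw ▸ List.mem_of_head? hb) hwB)
      fun a ha _ _ _ => ?_
    rcases hAw with rfl | ⟨u, hu, huw⟩
    · simp at ha
    · obtain rfl : a = u := Option.some_inj.mp (ha.symm.trans hu)
      exact huw

lemma not_rightNeighborsLT_winner {l l' : List α} {p : α × α × Bool} (h : LLMStep l p l')
    (hp : p.2.2 = false) : ¬ RightNeighborsLT p.1 l := by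
  cases h with
  | left => cases hp
  | right A u v B hAuv =>
    intro hu
    have huv : u < v := List.isChain_pair.mp (List.isChain_append.mp hAuv).2.1
    have hvu : v < u := (List.isChain_cons_cons.mp (List.isChain_append.mp hu).2.1).1 rfl
    exact huv.not_gt hvu

lemma not_leftNeighborsLT_winner {l l' : List α} {p : α × α × Bool} (h : LLMStep l p l')
    (hp : p.2.2 = true) : ¬ LeftNeighborsLT p.1 l := by
  cases h with
  | right => cases hp
  | left A v w B _ hwv =>
    intro hw
    have hvw : v < w := (List.isChain_cons_cons.mp (List.isChain_append.mp hw).2.1).1 rfl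
    exact hwv.not_gt hvw

end LLMStep

lemma card_filter_range_le_one_of_invariant {T : ℕ} {E P : ℕ → Prop} [DecidablePred E]
    (hset : ∀ t < T, E t → P (t + 1)) (hkeep : ∀ t < T, P t → P (t + 1))
    (hblock : ∀ t < T, E t → ¬ P t) : ((Finset.range T).filter E).card ≤ 1 := by
  have hP : ∀ s t, s < t → t ≤ T → E s → P t := by
    intro s t hst htT hs
    induction t, hst using Nat.le_induction with
    | base => exact hset s (by omega) hs
    | succ t hst ih => exact hkeep t (by omega) (ih (by omega))
  rw [Finset.card_le_one]
  intro a ha b hb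
  simp only [Finset.mem_filter, Finset.mem_range] at ha hb
  by_contra hab
  rcases lt_or_gt_of_ne hab with h | h
  · exact hblock b hb.1 hb.2 (hP a b h hb.1.le ha.2)
  · exact hblock a ha.1 ha.2 (hP b a h ha.1.le hb.2)

open Finset in
theorem stmt_12_general {α : Type*} [LinearOrder α] (T : ℕ)
    (state : ℕ → List α) (link : ℕ → α × α × Bool)
    (hnodup : (state 0).Nodup)
    (hstep : ∀ t < T, LLMStep (state t) (link t) (state (t + 1))) :
    ∀ x : α,
      ((Finset.range T).filter
          (fun t => (link t).1 = x ∧ (link t).2.2 = true)).card ≤ 1 ∧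
      ((Finset.range T).filter
          (fun t => (link t).1 = x ∧ (link t).2.2 = false)).card ≤ 1 := by
  have hnodup_state : ∀ t ≤ T, (state t).Nodup := by
    intro t ht
    induction t with
    | zero => exact hnodup
    | succ t ih => exact (hstep t ht).sublist.nodup (ih (by omega))
  intro x
  constructor
  · refine card_filter_range_le_one_of_invariant
      (P := fun t => LLMStep.LeftNeighborsLT x (state t)) ?_
      (fun t ht => (hstep t ht).leftNeighborsLT) ?_
    · rintro t ht ⟨rfl, hleft⟩
      exact (hstep t ht).leftNeighborsLT_winner (hnodup_state t ht.le) hleft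
    · rintro t ht ⟨rfl, hleft⟩
      exact (hstep t ht).not_leftNeighborsLT_winner hleft
  · refine card_filter_range_le_one_of_invariant
      (P := fun t => LLMStep.RightNeighborsLT x (state t)) ?_
      (fun t ht => (hstep t ht).rightNeighborsLT) ?_
    · rintro t ht ⟨rfl, hright⟩
      exact (hstep t ht).rightNeighborsLT_winner (hnodup_state t ht.le) hright
    · rintro t ht ⟨rfl, hright⟩
      exact (hstep t ht).not_rightNeighborsLT_winner hright

open Finset in
/-- Lemma 3.2: over an entire run of leftmost locally maximum linking from a list
of `m ≥ 1` roots with pairwise distinct keys down to a single root, each root wins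
at most one left link and at most one right link. -/
theorem stmt_12 {α : Type*} [LinearOrder α] (m T : ℕ) (hm : 1 ≤ m)
    (state : ℕ → List α) (link : ℕ → α × α × Bool)
    (hlen : (state 0).length = m) (hnodup : (state 0).Nodup)
    (hstep : ∀ t < T, LLMStep (state t) (link t) (state (t + 1)))
    (hend : (state T).length = 1) :
    ∀ x : α,
      ((Finset.range T).filter
          (fun t => (link t).1 = x ∧ (link t).2.2 = true)).card ≤ 1 ∧
      ((Finset.range T).filter
          (fun t => (link t).1 = x ∧ (link t).2.2 = false)).card ≤ 1 :=
  stmt_12_general T state link hnodup hstep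
end
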